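/- Let λ ∈ Γ_{μ+2} ⊂ ℝⁿ with λ₁ ≥ ⋯ ≥ λₙ and 1 ≤ μ ≤ n−2. Then for every index a with a ≤ μ, the partial derivative σ_μ^{aa}(λ) = σ_{μ−1}(λ|a) satisfies σ_μ^{aa}(λ) ≥ (λ₁ ⋯ λ_μ)/λ_a. -/

import Mathlib

/-- The `m`-th elementary symmetric polynomial of `x : Fin n → ℝ`. -/
noncomputable def esymm (n m : ℕ) (x : Fin n → ℝ) : ℝ :=
  ∑ s ∈ Finset.powersetCard m (Finset.univ : Finset (Fin n)), ∏ i ∈ s, x i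

/-- The `m`-th elementary symmetric polynomial of the entries of `x` with indices in `s`. -/
noncomputable def esymmRes (n : ℕ) (s : Finset (Fin n)) (m : ℕ) (x : Fin n → ℝ) : ℝ :=
  ∑ t ∈ Finset.powersetCard m s, ∏ i ∈ t, x i

/-!
For `λ ∈ Γ_k`, deleting any entry leaves a vector in `Γ_{k-1}`. This is proved by induction on
the number of entries from Newton's inequality `σ_i σ_{i+2} ≤ σ_{i+1}²`, which holds for all
real vectors: by Rolle's theorem the roots of a derivative of `∏ (X - λ_j)` are real and have the
same normalized symmetric functions, which reduces Newton's inequality to two variables.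

Expanding `σ_m(c, y) = σ_m(y) + c σ_{m-1}(y)` and discarding `σ_m(y) > 0`, one peels off entries
one at a time: if `y ∈ Γ_{m+1}` contains nonnegative entries `z_1, …, z_m`, then
`σ_m(y) ≥ z_1 ⋯ z_m`. Apply this to `y = (λ|a) ∈ Γ_{μ+1}` and the entries `λ_i`, `i ≤ μ`, `i ≠ a`;
these are positive because `λ ∈ Γ_{μ+2}` has at least `μ + 2` positive entries and is decreasing.
-/

open Polynomial

theorem Nat.choose_sub_mul_choose (n q r : ℕ) :
    (n - q).choose r * n.choose q = n.choose r * (n - r).choose q := by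
  have hq := Nat.choose_mul (n := n) (Nat.le_add_right q r)
  have hr := Nat.choose_mul (n := n) (Nat.le_add_left r q)
  rw [Nat.add_sub_cancel_left] at hq
  rw [Nat.add_sub_cancel, ← Nat.choose_symm_add] at hr
  rw [mul_comm, ← hq, hr]

theorem Nat.descFactorial_sub_mul_choose (n q r : ℕ) :
    (n - q).descFactorial r * n.choose q = n.descFactorial r * (n - r).choose q := by
  rw [Nat.descFactorial_eq_factorial_mul_choose, Nat.descFactorial_eq_factorial_mul_choose,
    mul_assoc, mul_assoc, Nat.choose_sub_mul_choose]

theorem Nat.choose_mul_choose_add_two_le_sq (n i : ℕ) :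
    n.choose i * n.choose (i + 2) ≤ n.choose (i + 1) ^ 2 := by
  have h1 : n.choose (i + 1) * (i + 1) = n.choose i * (n - i) := Nat.choose_succ_right_eq n i
  have h2 : n.choose (i + 2) * (i + 2) = n.choose (i + 1) * (n - (i + 1)) :=
    Nat.choose_succ_right_eq n (i + 1)
  have hle : (i + 1) * (n - (i + 1)) ≤ (i + 2) * (n - i) := Nat.mul_le_mul (by omega) (by omega)
  refine Nat.le_of_mul_le_mul_right (c := (i + 1) * (i + 2)) ?_ (by positivity)
  calc n.choose i * n.choose (i + 2) * ((i + 1) * (i + 2))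
      = n.choose i * (n.choose (i + 2) * (i + 2)) * (i + 1) := by ring
    _ = n.choose i * n.choose (i + 1) * ((i + 1) * (n - (i + 1))) := by rw [h2]; ring
    _ ≤ n.choose i * n.choose (i + 1) * ((i + 2) * (n - i)) := Nat.mul_le_mul_left _ hle
    _ = n.choose (i + 1) * (n.choose i * (n - i)) * (i + 2) := by ring
    _ = n.choose (i + 1) ^ 2 * ((i + 1) * (i + 2)) := by rw [← h1]; ring

theorem Polynomial.Splits.derivative {p : ℝ[X]} (hp : p.Splits) :
    (Polynomial.derivative p).Splits := by
  rw [splits_iff_card_roots] at hp ⊢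
  have h1 := card_roots_le_derivative p
  have h2 := card_roots' (Polynomial.derivative p)
  have h3 := natDegree_derivative_le p
  omega

theorem Polynomial.Splits.iterate_derivative {p : ℝ[X]} (hp : p.Splits) (k : ℕ) :
    (Polynomial.derivative^[k] p).Splits := by
  induction k with
  | zero => exact hp
  | succ k ih => rw [Function.iterate_succ_apply']; exact ih.derivative

namespace Multiset

section CommSemiring

variable {R : Type*} [CommSemiring R]

@[simp]
theorem esymm_zero (s : Multiset R) : s.esymm 0 = 1 := by
  simp [esymm, powersetCard_zero_left]

theorem esymm_cons_succ (a : R) (s : Multiset R) (m : ℕ) :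
    (a ::ₘ s).esymm (m + 1) = s.esymm (m + 1) + a * s.esymm m := by
  simp [esymm, powersetCard_cons, map_map, sum_map_mul_left]

theorem esymm_eq_zero_of_card_lt {s : Multiset R} {m : ℕ} (h : card s < m) : s.esymm m = 0 := by
  simp [esymm, powersetCard_eq_empty _ h]

theorem esymm_card (s : Multiset R) : s.esymm (card s) = s.prod := by
  induction s using Multiset.induction with
  | empty => simp
  | cons a t ih =>
    rw [card_cons, esymm_cons_succ, ih, esymm_eq_zero_of_card_lt (Nat.lt_succ_self _), prod_cons,
      zero_add]

end CommSemiring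

theorem esymm_nonneg {R : Type*} [CommSemiring R] [PartialOrder R] [IsOrderedRing R]
    {s : Multiset R} (hs : ∀ x ∈ s, 0 ≤ x) (m : ℕ) : 0 ≤ s.esymm m :=
  sum_nonneg fun _ hx ↦ by
    obtain ⟨t, ht, rfl⟩ := mem_map.1 hx
    exact prod_nonneg fun y hy ↦ hs y (mem_of_le (mem_powersetCard.1 ht).1 hy)

theorem esymm_eq_prod_mul_esymm_inv {K : Type*} [Field K] {s : Multiset K} (hs : (0 : K) ∉ s)
    {p q : ℕ} (hpq : p + q = card s) : s.esymm p = s.prod * (s.map (·⁻¹)).esymm q := by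
  induction s using Multiset.induction generalizing p q with
  | empty =>
    obtain ⟨rfl, rfl⟩ : p = 0 ∧ q = 0 := by simpa using hpq
    simp
  | cons a t ih =>
    have ha : a ≠ 0 := fun h ↦ hs (h ▸ mem_cons_self a t)
    have ht : (0 : K) ∉ t := fun h ↦ hs (mem_cons_of_mem h)
    rw [card_cons] at hpq
    rcases q with _ | q
    · obtain rfl : p = card (a ::ₘ t) := by simpa using hpq
      rw [esymm_card]
      simp
    have hsplit : (a ::ₘ t).prod * ((a ::ₘ t).map (·⁻¹)).esymm (q + 1)
        = a * (t.prod * (t.map (·⁻¹)).esymm (q + 1)) + t.prod * (t.map (·⁻¹)).esymm q := by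
      rw [map_cons, esymm_cons_succ, prod_cons]
      field_simp
    rw [hsplit, ← ih ht (by omega : p + q = card t)]
    rcases p with _ | p
    · rw [esymm_eq_zero_of_card_lt (s := t.map (·⁻¹)) (by simp; omega)]
      simp
    · rw [esymm_cons_succ, ← ih ht (by omega : p + (q + 1) = card t), add_comm]

/-- Newton's normalized mean `E_q = σ_q / (card s).choose q`; it vanishes for `q > card s`. -/
noncomputable def esymmMean (s : Multiset ℝ) (q : ℕ) : ℝ := s.esymm q / (card s).choose q

@[simp]
theorem esymmMean_zero (s : Multiset ℝ) : s.esymmMean 0 = 1 := by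
  simp [esymmMean]

theorem esymmMean_mul_choose (s : Multiset ℝ) (q : ℕ) :
    s.esymmMean q * (card s).choose q = s.esymm q := by
  rcases lt_or_ge (card s) q with h | h
  · simp [esymmMean, esymm_eq_zero_of_card_lt h]
  · exact div_mul_cancel₀ _ (by exact_mod_cast (Nat.choose_pos h).ne')

theorem esymmMean_eq_prod_mul_esymmMean_inv {s : Multiset ℝ} (hs : (0 : ℝ) ∉ s) {j : ℕ}
    (hj : j ≤ card s) : s.esymmMean j = s.prod * (s.map (·⁻¹)).esymmMean (card s - j) := by
  rw [esymmMean, esymmMean, esymm_eq_prod_mul_esymm_inv hs (Nat.add_sub_cancel' hj),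
    card_map, Nat.choose_symm hj, mul_div_assoc]

theorem coeff_iterate_derivative_prod_X_sub_C (s : Multiset ℝ) {d q : ℕ} (hd : d ≤ card s)
    (hq : q ≤ d) : (derivative^[card s - d] (s.map (X - C ·)).prod).coeff (d - q)
      = (card s - q).descFactorial (card s - d) * ((-1) ^ q * s.esymm q) := by
  rw [coeff_iterate_derivative, show d - q + (card s - d) = card s - q by omega,
    prod_X_sub_C_coeff s (Nat.sub_le _ q), Nat.sub_sub_self (by omega), nsmul_eq_mul]

/-- The witness is the root multiset of the `(card s - d)`-th derivative of `∏ (X - xᵢ)`, which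
is real-rooted by Rolle's theorem. -/
theorem exists_card_eq_esymmMean_eq (s : Multiset ℝ) {d : ℕ} (hd : d ≤ card s) :
    ∃ ν : Multiset ℝ, card ν = d ∧ ∀ q ≤ d, ν.esymmMean q = s.esymmMean q := by
  set n := card s
  set r := n - d
  set g := derivative^[r] (s.map (X - C ·)).prod
  have hA : (n.descFactorial r : ℝ) ≠ 0 :=
    Nat.cast_ne_zero.2 (Nat.descFactorial_eq_zero_iff_lt.not.2 (by omega))
  have hg_top : g.coeff d = n.descFactorial r := by
    simpa using coeff_iterate_derivative_prod_X_sub_C s hd d.zero_le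
  have hg_deg : g.natDegree = d := by
    refine le_antisymm ?_ (le_natDegree_of_ne_zero (by rw [hg_top]; exact hA))
    have := natDegree_iterate_derivative (s.map (X - C ·)).prod r
    rwa [natDegree_multiset_prod_X_sub_C_eq_card, show n - r = d by omega] at this
  have hg_splits : g.Splits := by
    refine Splits.iterate_derivative (splits_iff_card_roots.2 ?_) r
    rw [roots_multiset_prod_X_sub_C, natDegree_multiset_prod_X_sub_C_eq_card]
  have hg_card : card g.roots = d := by rw [splits_iff_card_roots.1 hg_splits, hg_deg]
  refine ⟨g.roots, hg_card, fun q hq ↦ ?_⟩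
  have hvieta := coeff_eq_esymm_roots_of_splits hg_splits (k := d - q) (by omega)
  rw [coeff_iterate_derivative_prod_X_sub_C s hd hq, leadingCoeff, hg_deg, hg_top,
    Nat.sub_sub_self hq] at hvieta
  have hkey : (n.descFactorial r : ℝ) * g.roots.esymm q = (n - q).descFactorial r * s.esymm q :=
    mul_left_cancel₀ (pow_ne_zero q (by norm_num : (-1 : ℝ) ≠ 0)) (by linear_combination -hvieta)
  have hchoose : ((n - q).descFactorial r : ℝ) * n.choose q = n.descFactorial r * d.choose q := by
    exact_mod_cast (show n - r = d by omega) ▸ Nat.descFactorial_sub_mul_choose n q r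
  rw [esymmMean, esymmMean, hg_card, div_eq_div_iff (by exact_mod_cast (Nat.choose_pos hq).ne')
    (by exact_mod_cast (Nat.choose_pos (hq.trans hd)).ne')]
  exact mul_left_cancel₀ hA (by linear_combination (n.choose q : ℝ) * hkey + s.esymm q * hchoose)

theorem esymmMean_eq_zero_of_card_lt {s : Multiset ℝ} {q : ℕ} (h : card s < q) :
    s.esymmMean q = 0 := by
  simp [esymmMean, esymm_eq_zero_of_card_lt h]

theorem esymmMean_two_le_sq (s : Multiset ℝ) : s.esymmMean 2 ≤ s.esymmMean 1 ^ 2 := by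
  rcases lt_or_ge (card s) 2 with hs | hs
  · rw [esymmMean_eq_zero_of_card_lt hs]
    positivity
  obtain ⟨ν, hν, hmean⟩ := exists_card_eq_esymmMean_eq s hs
  obtain ⟨x, y, rfl⟩ := card_eq_two.1 hν
  rw [← hmean 1 (by norm_num), ← hmean 2 le_rfl]
  norm_num [esymmMean, hν]
  nlinarith [sq_nonneg (x - y)]

theorem esymmMean_mul_esymmMean_le_sq_of_card_eq {s : Multiset ℝ} {i : ℕ}
    (hs : card s = i + 2) : s.esymmMean i * s.esymmMean (i + 2) ≤ s.esymmMean (i + 1) ^ 2 := by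
  by_cases h0 : (0 : ℝ) ∈ s
  · have htop : s.esymmMean (i + 2) = 0 := by
      rw [esymmMean, ← hs, esymm_card, prod_eq_zero h0, zero_div]
    rw [htop, mul_zero]
    positivity
  -- With `P = s.prod`, the reciprocals have means `E₂, E₁, E₀` equal to
  -- `E_i / P, E_{i+1} / P, E_{i+2} / P`.
  rw [esymmMean_eq_prod_mul_esymmMean_inv h0 (by omega),
    esymmMean_eq_prod_mul_esymmMean_inv h0 (by omega),
    esymmMean_eq_prod_mul_esymmMean_inv h0 (by omega), hs,
    show i + 2 - i = 2 by omega, show i + 2 - (i + 1) = 1 by omega, Nat.sub_self, esymmMean_zero]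
  have := mul_le_mul_of_nonneg_left (esymmMean_two_le_sq (s.map (·⁻¹))) (sq_nonneg s.prod)
  linarith

theorem esymmMean_mul_esymmMean_le_sq (s : Multiset ℝ) (i : ℕ) :
    s.esymmMean i * s.esymmMean (i + 2) ≤ s.esymmMean (i + 1) ^ 2 := by
  rcases lt_or_ge (card s) (i + 2) with hs | hs
  · rw [esymmMean_eq_zero_of_card_lt hs, mul_zero]
    positivity
  obtain ⟨ν, hν, hmean⟩ := exists_card_eq_esymmMean_eq s hs
  rw [← hmean i (by omega), ← hmean (i + 1) (by omega), ← hmean (i + 2) le_rfl]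
  exact esymmMean_mul_esymmMean_le_sq_of_card_eq hν

theorem esymm_mul_esymm_le_sq (s : Multiset ℝ) (i : ℕ) :
    s.esymm i * s.esymm (i + 2) ≤ s.esymm (i + 1) ^ 2 := by
  have hchoose :
      ((card s).choose i : ℝ) * (card s).choose (i + 2) ≤ (card s).choose (i + 1) ^ 2 := by
    exact_mod_cast Nat.choose_mul_choose_add_two_le_sq (card s) i
  simp only [← esymmMean_mul_choose]
  calc s.esymmMean i * (card s).choose i * (s.esymmMean (i + 2) * (card s).choose (i + 2))
      = s.esymmMean i * s.esymmMean (i + 2) * ((card s).choose i * (card s).choose (i + 2)) := by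
        ring
    _ ≤ s.esymmMean (i + 1) ^ 2 * ((card s).choose i * (card s).choose (i + 2)) :=
        mul_le_mul_of_nonneg_right (esymmMean_mul_esymmMean_le_sq s i) (by positivity)
    _ ≤ s.esymmMean (i + 1) ^ 2 * (card s).choose (i + 1) ^ 2 :=
        mul_le_mul_of_nonneg_left hchoose (sq_nonneg _)
    _ = (s.esymmMean (i + 1) * (card s).choose (i + 1)) ^ 2 := by ring

end Multiset

section GardingCone

open Multiset

def gardingCone (k : ℕ) : Set (Multiset ℝ) := {s | ∀ j ≤ k, 0 < s.esymm j}

theorem gardingCone_anti : Antitone gardingCone := fun _ _ hk _ hs j hj ↦ hs j (hj.trans hk)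

theorem mem_gardingCone_zero (s : Multiset ℝ) : s ∈ gardingCone 0 := fun j hj ↦ by
  simp [Nat.le_zero.1 hj]

theorem mem_gardingCone_succ {k : ℕ} {s : Multiset ℝ} (hs : s ∈ gardingCone k)
    (h : 0 < s.esymm (k + 1)) : s ∈ gardingCone (k + 1) := fun j hj ↦
  (Nat.le_succ_iff.1 hj).elim (hs j) fun hj ↦ hj ▸ h

theorem mem_gardingCone_of_cons_of_nonpos {k : ℕ} {a : ℝ} {s : Multiset ℝ} (ha : a ≤ 0)
    (h : a ::ₘ s ∈ gardingCone k) : s ∈ gardingCone k := by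
  intro j hj
  induction j with
  | zero => simp
  | succ j ih =>
    have hcons := h (j + 1) hj
    rw [esymm_cons_succ] at hcons
    nlinarith [mul_nonpos_of_nonpos_of_nonneg ha (ih (by omega)).le]

theorem mem_gardingCone_of_add_of_nonpos {k : ℕ} {s t : Multiset ℝ} (ht : ∀ x ∈ t, x ≤ 0)
    (h : s + t ∈ gardingCone k) : s ∈ gardingCone k := by
  induction t using Multiset.induction with
  | empty => simpa using h
  | cons a t ih =>
    rw [add_cons] at h
    exact ih (fun x hx ↦ ht x (mem_cons_of_mem hx))
      (mem_gardingCone_of_cons_of_nonpos (ht a (mem_cons_self a t)) h)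

theorem le_card_of_mem_gardingCone {k : ℕ} {s : Multiset ℝ} (h : s ∈ gardingCone k) :
    k ≤ card s := by
  by_contra hk
  simpa [esymm_eq_zero_of_card_lt (not_le.1 hk)] using h k le_rfl

theorem le_card_filter_pos_of_mem_gardingCone {k : ℕ} {s : Multiset ℝ}
    (h : s ∈ gardingCone k) : k ≤ card (s.filter (0 < ·)) := by
  refine le_card_of_mem_gardingCone (mem_gardingCone_of_add_of_nonpos (t := s.filter (¬0 < ·))
    (fun x hx ↦ not_lt.1 (mem_filter.1 hx).2) ?_)
  rwa [filter_add_not]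

theorem esymm_succ_pos_of_nonneg {a : ℝ} {s : Multiset ℝ} {K : ℕ} (hs : ∀ x ∈ s, 0 ≤ x)
    (hK : 0 < s.esymm K) (h : 0 < (a ::ₘ s).esymm (K + 2)) : 0 < s.esymm (K + 1) := by
  refine (esymm_nonneg hs _).lt_of_ne' fun h0 ↦ ?_
  have hnewton := esymm_mul_esymm_le_sq s K
  rw [esymm_cons_succ, h0, mul_zero, add_zero] at h
  rw [h0] at hnewton
  nlinarith

theorem esymm_succ_pos_of_cons_cons {a b : ℝ} {t : Multiset ℝ} {K : ℕ} (ha : 0 ≤ a)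
    (ht : t ∈ gardingCone (K + 1)) (h : 0 < (a ::ₘ b ::ₘ t).esymm (K + 2)) :
    0 < (b ::ₘ t).esymm (K + 1) := by
  refine lt_of_not_ge fun hle ↦ ?_
  have hK := ht K (by omega)
  have hK1 := ht (K + 1) le_rfl
  have hnewton := esymm_mul_esymm_le_sq t K
  have hK2 : 0 < (b ::ₘ t).esymm (K + 2) := by
    rw [esymm_cons_succ] at h
    nlinarith [mul_nonpos_of_nonneg_of_nonpos ha hle]
  -- `σ_{K+1}(t) ≤ -b σ_K(t)` and `-b σ_{K+1}(t) < σ_{K+2}(t)` would give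
  -- `σ_{K+1}(t)² < σ_K(t) σ_{K+2}(t)`, against Newton.
  rw [esymm_cons_succ] at hle hK2
  nlinarith [mul_le_mul_of_nonneg_left hle hK1.le]

theorem mem_gardingCone_of_cons {s : Multiset ℝ} :
    ∀ {k : ℕ} {a : ℝ}, a ::ₘ s ∈ gardingCone (k + 1) → s ∈ gardingCone k := by
  induction s using Multiset.strongInductionOn with | _ s ihs => ?_
  intro k a h
  induction k with
  | zero => exact mem_gardingCone_zero s
  | succ K ihk =>
    have hK := ihk (gardingCone_anti (by omega) h)
    refine mem_gardingCone_succ hK ?_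
    rcases le_or_gt a 0 with ha | ha
    · exact mem_gardingCone_of_cons_of_nonpos ha h (K + 1) (by omega)
    by_cases hnonneg : ∀ x ∈ s, 0 ≤ x
    · exact esymm_succ_pos_of_nonneg hnonneg (hK K le_rfl) (h (K + 2) le_rfl)
    obtain ⟨b, hbs, hb⟩ : ∃ b ∈ s, b < 0 := by simpa using hnonneg
    obtain ⟨t, rfl⟩ := exists_cons_of_mem hbs
    have hat : a ::ₘ t ∈ gardingCone (K + 2) :=
      mem_gardingCone_of_cons_of_nonpos hb.le (by rwa [cons_swap] at h)
    exact esymm_succ_pos_of_cons_cons ha.le (ihs t (lt_cons_self t b) hat) (h (K + 2) le_rfl)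

theorem prod_le_esymm_of_mem_gardingCone {m : ℕ} {y z : Multiset ℝ}
    (hy : y ∈ gardingCone (m + 1)) (hzy : z ≤ y) (hz : card z = m) (hnonneg : ∀ x ∈ z, 0 ≤ x) :
    z.prod ≤ y.esymm m := by
  induction m generalizing y z with
  | zero => simp [card_eq_zero.1 hz]
  | succ m ih =>
    obtain ⟨c, z', rfl, hz'⟩ := card_eq_succ_iff.1 hz
    obtain ⟨y', rfl⟩ := exists_cons_of_mem (mem_of_le hzy (mem_cons_self c z'))
    have hy' := mem_gardingCone_of_cons hy
    have hc := hnonneg c (mem_cons_self c z')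
    have hprod := ih hy' ((cons_le_cons_iff c).1 hzy) hz'
      fun x hx ↦ hnonneg x (mem_cons_of_mem hx)
    rw [prod_cons, esymm_cons_succ]
    nlinarith [hy' (m + 1) le_rfl, mul_le_mul_of_nonneg_left hprod hc]

end GardingCone

open scoped Finset

section Indexed

variable {ι : Type*} {x : ι → ℝ}

theorem prod_le_esymm_map_of_subset {s t : Finset ι} (hst : s ⊆ t)
    (ht : t.val.map x ∈ gardingCone (#s + 1)) (hs : ∀ i ∈ s, 0 ≤ x i) :
    ∏ i ∈ s, x i ≤ (t.val.map x).esymm #s := by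
  refine prod_le_esymm_of_mem_gardingCone ht (Multiset.map_le_map (Finset.val_le_iff.2 hst))
    (Multiset.card_map _ _) fun y hy ↦ ?_
  obtain ⟨i, hi, rfl⟩ := Multiset.mem_map.1 hy
  exact hs i hi

theorem map_compl_singleton_mem_gardingCone [Fintype ι] [DecidableEq ι] {k : ℕ}
    (h : Finset.univ.val.map x ∈ gardingCone (k + 1)) (a : ι) :
    ({a}ᶜ : Finset ι).val.map x ∈ gardingCone k := by
  refine mem_gardingCone_of_cons (a := x a) ?_
  rwa [Finset.compl_singleton, Finset.erase_val, ← Multiset.map_cons,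
    Multiset.cons_erase (Finset.mem_univ_val a)]

end Indexed

section Fin

variable {n : ℕ} {x : Fin n → ℝ}

theorem map_univ_mem_gardingCone {k : ℕ} (h : ∀ m, 1 ≤ m → m ≤ k → 0 < esymm n m x) :
    Finset.univ.val.map x ∈ gardingCone k := fun j hj ↦ by
  rcases j.eq_zero_or_pos with rfl | hj0
  · simp
  · rw [Finset.esymm_map_val]
    exact h j hj0 hj

theorem pos_of_antitone_of_mem_gardingCone (hx : Antitone x) {k : ℕ}
    (h : Finset.univ.val.map x ∈ gardingCone k) {i : Fin n} (hi : (i : ℕ) < k) : 0 < x i := by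
  have hcount : k ≤ #{j | 0 < x j} := by
    have := le_card_filter_pos_of_mem_gardingCone h
    rwa [Multiset.filter_map, Multiset.card_map] at this
  refine lt_of_not_ge fun hxi ↦ (hi.trans_le hcount).not_ge ?_
  calc #{j | 0 < x j} ≤ #(Finset.Iio i) := Finset.card_le_card fun j hj ↦ by
        simp only [Finset.mem_filter, Finset.mem_univ, true_and] at hj
        exact Finset.mem_Iio.2 (lt_of_not_ge fun hij ↦ ((hx hij).trans hxi).not_gt hj)
    _ = i := Fin.card_Iio i

end Fin

theorem stmt5_general (n μ : ℕ)
    (lam : Fin n → ℝ)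
    (hGamma : ∀ m, 1 ≤ m → m ≤ μ + 2 → 0 < esymm n m lam)
    (hdec : ∀ i j : Fin n, i ≤ j → lam j ≤ lam i)
    (a : Fin n) (ha : (a : ℕ) < μ) :   -- `a ≤ μ` in 1-based indexing
    esymmRes n {a}ᶜ (μ - 1) lam
      ≥ (∏ i ∈ Finset.univ.filter (fun i : Fin n => (i : ℕ) < μ), lam i) / lam a := by
  classical
  have hcone := map_univ_mem_gardingCone hGamma
  have hn : μ + 2 ≤ n := by simpa using le_card_of_mem_gardingCone hcone
  have hpos (i : Fin n) (hi : (i : ℕ) < μ) : 0 < lam i :=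
    pos_of_antitone_of_mem_gardingCone hdec hcone (by omega)
  set F := Finset.univ.filter (fun i : Fin n => (i : ℕ) < μ)
  have haF : a ∈ F := by simp [F, ha]
  have hcard : #(F.erase a) = μ - 1 := by
    rw [Finset.card_erase_of_mem haF, Fin.card_filter_val_lt, min_eq_right (by omega)]
  have hprod := prod_le_esymm_map_of_subset (x := lam) (s := F.erase a) (t := {a}ᶜ)
    (fun j hj ↦ by simpa using Finset.ne_of_mem_erase hj)
    (by rw [hcard, Nat.sub_add_cancel (by omega)]
        exact map_compl_singleton_mem_gardingCone (gardingCone_anti (by omega) hcone) a)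
    fun i hi ↦ (hpos i (by simpa [F] using Finset.mem_of_mem_erase hi)).le
  rw [ge_iff_le, esymmRes, ← Finset.esymm_map_val, ← hcard, ← Finset.mul_prod_erase F lam haF,
    mul_div_cancel_left₀ _ (hpos a ha).ne']
  exact hprod

theorem stmt5 (n μ : ℕ) (hμ : 1 ≤ μ) (hμn : μ ≤ n - 2)
    (lam : Fin n → ℝ)
    (hGamma : ∀ m, 1 ≤ m → m ≤ μ + 2 → 0 < esymm n m lam)
    (hdec : ∀ i j : Fin n, i ≤ j → lam j ≤ lam i)
    (a : Fin n) (ha : (a : ℕ) < μ) :   -- `a ≤ μ` in 1-based indexing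
    esymmRes n {a}ᶜ (μ - 1) lam
      ≥ (∏ i ∈ Finset.univ.filter (fun i : Fin n => (i : ℕ) < μ), lam i) / lam a :=
  stmt5_general n μ lam hGamma hdec a ha
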